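/- arXiv:2112.08825 — 3 statements merged into one kernel-verified Lean document; each statement's English description precedes it below -/
import Mathlib

section
/- Let G be a 2-connected graph and let e and f be any two edges of G. Then there is a cycle of G containing both e and f. -/
open SimpleGraph

/-- A graph is cubic if every vertex has exactly 3 neighbors. -/
def CubicGraph {V : Type*} (G : SimpleGraph V) : Prop :=
  ∀ v : V, (G.neighborSet v).ncard = 3

/-- `G` is `k`-connected: more than `k` vertices, and deleting any set of
fewer than `k` vertices leaves a connected graph. -/
def KConn {V : Type*} [Fintype V] (k : ℕ) (G : SimpleGraph V) : Prop :=
  k < Fintype.card V ∧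
  ∀ S : Finset V, S.card < k → (G.induce ((↑S : Set V)ᶜ)).Connected

/-- There is a cycle through `v` in `G`. -/
def HasCycleAt {V : Type*} (G : SimpleGraph V) (v : V) : Prop :=
  ∃ c : G.Walk v v, c.IsCycle

/-- A set `X` of edges is cycle-separating: after deleting `X`, at least two
distinct connected components contain cycles. -/
def CycleSeparating {V : Type*} (G : SimpleGraph V) (X : Set (Sym2 V)) : Prop :=
  ∃ u v : V, HasCycleAt (G.deleteEdges X) u ∧ HasCycleAt (G.deleteEdges X) v ∧
    (G.deleteEdges X).connectedComponentMk u ≠ (G.deleteEdges X).connectedComponentMk v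

/-- A cubic graph is cyclically `k`-connected if it is 3-connected, has at least
`2k` vertices, and has no cycle-separating edge-cut of size less than `k`. -/
def CyclicallyKConn {V : Type*} [Fintype V] (k : ℕ) (G : SimpleGraph V) : Prop :=
  KConn 3 G ∧ 2 * k ≤ Fintype.card V ∧
  ∀ X : Finset (Sym2 V), ↑X ⊆ G.edgeSet → X.card < k → ¬ CycleSeparating G ↑X

/-- Edges `ab` and `cd` are non-adjacent edges of `G` (they share no endpoint). -/
def NonadjPair {V : Type*} (G : SimpleGraph V) (a b c d : V) : Prop :=
  G.Adj a b ∧ G.Adj c d ∧ a ≠ c ∧ a ≠ d ∧ b ≠ c ∧ b ≠ d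

/-- The graph obtained from `H` by bridging edges `ab` and `cd`: subdivide `ab`
with a new vertex `x = Sum.inr 0`, subdivide `cd` with a new vertex `y = Sum.inr 1`,
and join `x` to `y`. -/
def Bridge {V : Type*} (H : SimpleGraph V) (a b c d : V) : SimpleGraph (V ⊕ Fin 2) :=
  SimpleGraph.fromEdgeSet
    ((Sym2.map Sum.inl '' (H.edgeSet \ {s(a, b), s(c, d)})) ∪
      {s(Sum.inr 0, Sum.inl a), s(Sum.inr 0, Sum.inl b),
       s(Sum.inr 1, Sum.inl c), s(Sum.inr 1, Sum.inl d),
       s(Sum.inr 0, Sum.inr 1)})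

/-- Both edges `e` and `f` lie on a common 4-cycle of `G`. -/
def InCommonCycle4 {V : Type*} (G : SimpleGraph V) (e f : Sym2 V) : Prop :=
  ∃ (v : V) (c : G.Walk v v), c.IsCycle ∧ c.length = 4 ∧ e ∈ c.edges ∧ f ∈ c.edges

/-- The ladder `Q_{2k}`: the Cartesian product of the cycle `C_k` with `K_2`. -/
def LadderQ (k : ℕ) : SimpleGraph (Fin k × Fin 2) :=
  SimpleGraph.cycleGraph k □ completeGraph (Fin 2)

/-- The Möbius ladder `V_{2k}`: the circulant graph on `ZMod (2k)` with
connection set `{1, -1, k}`. -/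
def MobiusV (k : ℕ) : SimpleGraph (ZMod (2 * k)) :=
  SimpleGraph.circulantGraph {1, -1, (k : ZMod (2 * k))}

/-- The Petersen graph: vertices are the 2-element subsets of a 5-element set,
adjacent iff disjoint (the Kneser graph K(5,2)). -/
def Petersen : SimpleGraph {s : Finset (Fin 5) // s.card = 2} where
  Adj s t := Disjoint (s : Finset (Fin 5)) (t : Finset (Fin 5))
  symm := ⟨fun s t h => h.symm⟩
  loopless := ⟨fun s h => by
    have h2 := s.2
    simp only [disjoint_self, Finset.bot_eq_empty] at h
    rw [h] at h2
    simp at h2⟩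

/-!
An edge `e` of a 2-connected graph is not a bridge, so it lies on a cycle `C`. For `w` on `C` and
an edge `wv` not on `C`, take a path from `v` to `C` avoiding `w` and stop it at the first vertex
`x` it meets on `C`; followed by the arc of `C` from `x` to `w` that carries `e` and closed by
`wv`, it is a cycle through `e` and `wv`. Repeating this along a walk gives a cycle through `e`
and an endpoint `u` of `f = uv`, and one more step gives a cycle through `e` and `f`.
-/

namespace SimpleGraph.Walk

variable {V : Type*} {G : SimpleGraph V}

lemma IsPath.exists_isPath_to_first_mem {S : Set V} {u v : V} {p : G.Walk u v} (hp : p.IsPath)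
    (hv : v ∈ S) :
    ∃ x ∈ S, ∃ q : G.Walk u x, q.IsPath ∧ q.support ⊆ p.support ∧
      ∀ y ∈ q.support, y ∈ S → y = x := by
  induction p with
  | nil => exact ⟨_, hv, Walk.nil, .nil, List.Subset.refl _, by simp⟩
  | @cons u w v h p ih =>
    rw [cons_isPath_iff] at hp
    by_cases hu : u ∈ S
    · exact ⟨u, hu, Walk.nil, .nil, by simp, by simp⟩
    obtain ⟨x, hxS, q, hq, hqp, hqS⟩ := ih hp.1 hv
    refine ⟨x, hxS, cons h q, hq.cons fun huq ↦ hp.2 (hqp huq), ?_, ?_⟩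
    · simpa using List.subset_cons_of_subset _ hqp
    · simp only [support_cons, List.mem_cons, forall_eq_or_imp]
      exact ⟨fun huS ↦ absurd huS hu, hqS⟩

lemma IsPath.append_of_forall_mem_support {u v w : V} {p : G.Walk u v} {q : G.Walk v w}
    (hp : p.IsPath) (hq : q.IsPath) (h : ∀ y ∈ p.support, y ∈ q.support → y = v) :
    (p.append q).IsPath := by
  rw [isPath_def, support_append, List.nodup_append]
  have hq' := hq.support_nodup
  rw [← cons_tail_support q, List.nodup_cons] at hq'
  refine ⟨hp.support_nodup, hq'.2, fun y hyp y' hyq hyy' ↦ hq'.1 ?_⟩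
  subst hyy'
  exact h y hyp (List.mem_of_mem_tail hyq) ▸ hyq

variable [DecidableEq V]

lemma IsCycle.exists_isPath_mem_edges {w x : V} {e : Sym2 V} {c : G.Walk w w} (hc : c.IsCycle)
    (hx : x ∈ c.support) (hxw : x ≠ w) (he : e ∈ c.edges) :
    ∃ arc : G.Walk x w, arc.IsPath ∧ e ∈ arc.edges ∧
      arc.support ⊆ c.support ∧ arc.edges ⊆ c.edges := by
  have hsplit := c.take_spec hx
  have htake : (c.takeUntil x hx).IsPath := hc.isPath_takeUntil hx
  have hdrop : (c.dropUntil x hx).IsPath :=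
    (hsplit ▸ hc).isPath_of_append_right (not_nil_of_ne hxw.symm)
  rw [← hsplit, edges_append, List.mem_append] at he
  rcases he with he | he
  · refine ⟨(c.takeUntil x hx).reverse, htake.reverse, by simpa using he, ?_, ?_⟩
    · simpa using c.support_takeUntil_subset_support hx
    · simpa using c.edges_takeUntil_subset_edges hx
  · exact ⟨c.dropUntil x hx, hdrop, he, c.support_dropUntil_subset_support hx,
      c.edges_dropUntil_subset_edges hx⟩

end SimpleGraph.Walk

namespace KConn

open Walk

variable {V : Type*} [Fintype V] {G : SimpleGraph V}

lemma exists_ne_ne (h : KConn 2 G) (a b : V) : ∃ c, c ≠ a ∧ c ≠ b := by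
  classical
  obtain ⟨c, hc⟩ : ({a, b}ᶜ : Finset V).Nonempty := by
    rw [← Finset.card_pos, Finset.card_compl]
    have : ({a, b} : Finset V).card ≤ 2 := Finset.card_le_two
    have := h.1
    omega
  exact ⟨c, by simpa [not_or] using hc⟩

lemma exists_isPath_notMem_support (h : KConn 2 G) {w x y : V} (hx : x ≠ w) (hy : y ≠ w) :
    ∃ p : G.Walk x y, p.IsPath ∧ w ∉ p.support := by
  classical
  obtain ⟨p⟩ := h.2 {w} (by simp) ⟨x, by simpa using hx⟩ ⟨y, by simpa using hy⟩
  refine ⟨(p.map (Embedding.induce _).toHom).bypass, bypass_isPath _, fun hw ↦ ?_⟩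
  obtain ⟨z, -, hzw⟩ := List.mem_map.1 (support_map _ p ▸ support_bypass_subset_support _ hw)
  exact z.2 (by simpa using hzw)

lemma preconnected (h : KConn 2 G) : G.Preconnected := by
  intro x y
  obtain ⟨w, hwx, hwy⟩ := h.exists_ne_ne x y
  obtain ⟨p, -⟩ := h.exists_isPath_notMem_support hwx.symm hwy.symm
  exact p.reachable

lemma exists_isCycle_mem_edges (h : KConn 2 G) {e : Sym2 V} (he : e ∈ G.edgeSet) :
    ∃ (r : V) (c : G.Walk r r), c.IsCycle ∧ e ∈ c.edges := by
  induction e using Sym2.ind with | _ a b =>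
  refine adj_and_reachable_delete_edges_iff_exists_cycle.1 ⟨he, ?_⟩
  obtain ⟨c, hca, hcb⟩ := h.exists_ne_ne a b
  obtain ⟨p, -, hbp⟩ := h.exists_isPath_notMem_support (w := b) (G.ne_of_adj he) hcb
  obtain ⟨q, -, haq⟩ := h.exists_isPath_notMem_support (w := a) hca (G.ne_of_adj he).symm
  refine reachable_deleteEdges_iff_exists_walk.2 ⟨p.append q, fun hab ↦ ?_⟩
  rw [edges_append, List.mem_append] at hab
  rcases hab with hab | hab
  · exact hbp (p.snd_mem_support_of_mem_edges hab)
  · exact haq (q.fst_mem_support_of_mem_edges hab)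

variable [DecidableEq V]

lemma exists_isCycle_mem_edges_of_adj (h : KConn 2 G) {r w v : V} {e : Sym2 V}
    {c : G.Walk r r} (hc : c.IsCycle) (he : e ∈ c.edges) (hw : w ∈ c.support)
    (hwv : G.Adj w v) (hwvc : s(w, v) ∉ c.edges) :
    ∃ (r' : V) (c' : G.Walk r' r'), c'.IsCycle ∧ e ∈ c'.edges ∧ s(w, v) ∈ c'.edges := by
  set d := c.rotate w hw
  have hd : d.IsCycle := hc.rotate hw
  have hed : e ∈ d.edges := (c.rotate_edges w hw).mem_iff.2 he
  have hwvd : s(w, v) ∉ d.edges := fun h ↦ hwvc ((c.rotate_edges w hw).mem_iff.1 h)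
  have hsnd : d.snd ≠ w := (d.adj_snd hd.not_nil).ne'
  obtain ⟨p, hp, hwp⟩ := h.exists_isPath_notMem_support hwv.ne' hsnd
  obtain ⟨x, hxd, q, hq, hqp, hqd⟩ :=
    hp.exists_isPath_to_first_mem (S := {y | y ∈ d.support}) (d.getVert_mem_support 1)
  have hwq : w ∉ q.support := fun h ↦ hwp (hqp h)
  have hxw : x ≠ w := fun h ↦ hwq (h ▸ q.end_mem_support)
  obtain ⟨arc, harc, hearc, harcd, harcd'⟩ := hd.exists_isPath_mem_edges hxd hxw hed
  have hpath : (q.append arc).IsPath :=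
    hq.append_of_forall_mem_support harc fun y hyq hyarc ↦ hqd y hyq (harcd hyarc)
  have hwv_notMem : s(w, v) ∉ (q.append arc).edges := by
    rw [edges_append, List.mem_append]
    rintro (h | h)
    · exact hwq (q.fst_mem_support_of_mem_edges h)
    · exact hwvd (harcd' h)
  refine ⟨w, cons hwv (q.append arc), (cons_isCycle_iff _ hwv).2 ⟨hpath, hwv_notMem⟩, ?_, ?_⟩
  · simp [hearc]
  · simp

lemma exists_isCycle_mem_edges_mem_support (h : KConn 2 G) {e : Sym2 V} (he : e ∈ G.edgeSet)
    (v : V) : ∃ (r : V) (c : G.Walk r r), c.IsCycle ∧ e ∈ c.edges ∧ v ∈ c.support := by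
  obtain ⟨r, c, hc, hec⟩ := h.exists_isCycle_mem_edges he
  obtain ⟨p⟩ := h.preconnected v r
  suffices ∀ {u x : V}, G.Walk u x →
      (∃ (r : V) (c : G.Walk r r), c.IsCycle ∧ e ∈ c.edges ∧ x ∈ c.support) →
      ∃ (r : V) (c : G.Walk r r), c.IsCycle ∧ e ∈ c.edges ∧ u ∈ c.support from
    this p ⟨r, c, hc, hec, c.start_mem_support⟩
  intro u x p
  induction p with
  | nil => exact id
  | @cons u w x huw p ih =>
    intro hx
    obtain ⟨r, c, hc, hec, hwc⟩ := ih hx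
    by_cases huc : u ∈ c.support
    · exact ⟨r, c, hc, hec, huc⟩
    obtain ⟨r', c', hc', hec', hwu⟩ := h.exists_isCycle_mem_edges_of_adj hc hec hwc huw.symm
      fun hwu ↦ huc (c.snd_mem_support_of_mem_edges hwu)
    exact ⟨r', c', hc', hec', c'.snd_mem_support_of_mem_edges hwu⟩

end KConn

theorem stmt5 {V : Type*} [Fintype V] (G : SimpleGraph V)
    (h2conn : KConn 2 G) (e f : Sym2 V)
    (he : e ∈ G.edgeSet) (hf : f ∈ G.edgeSet) :
    ∃ (v : V) (c : G.Walk v v), c.IsCycle ∧ e ∈ c.edges ∧ f ∈ c.edges := by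
  classical
  induction f using Sym2.ind with | _ u v =>
  obtain ⟨r, c, hc, hec, huc⟩ := h2conn.exists_isCycle_mem_edges_mem_support he u
  by_cases hfc : s(u, v) ∈ c.edges
  · exact ⟨r, c, hc, hec, hfc⟩
  · exact h2conn.exists_isCycle_mem_edges_of_adj hc hec huc hf hfc
end

section
/- For any pair of non-adjacent edges ab and cd of the complete bipartite graph K_{3,3}, the graph obtained from K_{3,3} by bridging ab and cd is isomorphic to V_8, the Möbius ladder on 8 vertices. -/
open SimpleGraph

/-!
Bridging commutes with graph isomorphisms and depends only on the two edges, not on the order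
of their endpoints. Every edge of `K_{3,3}` joins the two sides, and the automorphisms
`Perm (Fin 3) × Perm (Fin 3)` act 2-transitively on each side, so any pair of non-adjacent edges
can be moved to `{inl 0, inr 0}, {inl 1, inr 1}`. For that one pair an explicit labelling
exhibits the Möbius ladder.
-/

namespace SimpleGraph

open Sum

variable {V W : Type*} {H : SimpleGraph V} {a b c d : V}

@[simp]
theorem bridge_adj_inl_inl {p q : V} :
    (Bridge H a b c d).Adj (inl p) (inl q) ↔
      H.Adj p q ∧ s(p, q) ≠ s(a, b) ∧ s(p, q) ≠ s(c, d) := by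
  have hmap : s(inl p, inl q) = Sym2.map (inl : V → V ⊕ Fin 2) s(p, q) := rfl
  simp only [Bridge, fromEdgeSet_adj, Set.mem_union, hmap,
    (Sym2.map.injective inl_injective).mem_set_image]
  simp only [← hmap, Set.mem_sdiff, mem_edgeSet, Set.mem_insert_iff, Set.mem_singleton_iff,
    Sym2.eq_iff, reduceCtorEq, false_and, and_false, or_false, ne_eq, inl.injEq]
  have := @Adj.ne _ H p q
  tauto

@[simp]
theorem bridge_adj_inl_inr {p : V} {t : Fin 2} :
    (Bridge H a b c d).Adj (inl p) (inr t) ↔ (t = 0 ∧ p ∈ s(a, b)) ∨ (t = 1 ∧ p ∈ s(c, d)) := by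
  fin_cases t <;> simp [Bridge, Sym2.exists]

@[simp]
theorem bridge_adj_inr_inl {p : V} {t : Fin 2} :
    (Bridge H a b c d).Adj (inr t) (inl p) ↔ (t = 0 ∧ p ∈ s(a, b)) ∨ (t = 1 ∧ p ∈ s(c, d)) := by
  rw [adj_comm, bridge_adj_inl_inr]

@[simp]
theorem bridge_adj_inr_inr {s t : Fin 2} : (Bridge H a b c d).Adj (inr s) (inr t) ↔ s ≠ t := by
  fin_cases s <;> fin_cases t <;> simp [Bridge, Sym2.exists]

instance [DecidableEq V] [DecidableRel H.Adj] : DecidableRel (Bridge H a b c d).Adj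
  | inl _, inl _ => decidable_of_iff' _ bridge_adj_inl_inl
  | inl _, inr _ => decidable_of_iff' _ bridge_adj_inl_inr
  | inr _, inl _ => decidable_of_iff' _ bridge_adj_inr_inl
  | inr _, inr _ => decidable_of_iff' _ bridge_adj_inr_inr

theorem bridge_congr {a' b' c' d' : V} (hab : s(a, b) = s(a', b')) (hcd : s(c, d) = s(c', d')) :
    Bridge H a b c d = Bridge H a' b' c' d' := by
  ext u v
  rcases u with p | s <;> rcases v with q | t <;>
    simp only [bridge_adj_inl_inl, bridge_adj_inl_inr, bridge_adj_inr_inl, bridge_adj_inr_inr,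
      hab, hcd]

def Iso.bridge {H' : SimpleGraph W} (φ : H ≃g H') (a b c d : V) :
    Bridge H a b c d ≃g Bridge H' (φ a) (φ b) (φ c) (φ d) where
  toEquiv := φ.toEquiv.sumCongr (Equiv.refl _)
  map_rel_iff' {u v} := by
    have hsym : ∀ x y z w : V, s(φ x, φ y) = s(φ z, φ w) ↔ s(x, y) = s(z, w) := fun x y z w =>
      (Sym2.map.injective φ.injective).eq_iff (a := s(x, y)) (b := s(z, w))
    have hmem : ∀ x y z : V, φ x ∈ s(φ y, φ z) ↔ x ∈ s(y, z) := by
      simp [φ.injective.eq_iff]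
    rcases u with p | s <;> rcases v with q | t <;>
      simp only [Equiv.sumCongr_apply, Sum.map_inl, Sum.map_inr, RelIso.coe_fn_toEquiv,
        Equiv.refl_apply, bridge_adj_inl_inl, bridge_adj_inl_inr, bridge_adj_inr_inl,
        bridge_adj_inr_inr, ne_eq, hsym, hmem, φ.map_adj_iff]

instance {α β : Type*} : DecidableRel (completeBipartiteGraph α β).Adj :=
  fun _ _ => inferInstanceAs (Decidable (_ ∨ _))

theorem completeBipartiteGraph_edge_eq {α β : Type*} {a b : α ⊕ β}
    (h : (completeBipartiteGraph α β).Adj a b) : ∃ i j, s(a, b) = s(inl i, inr j) := by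
  rcases a with i | j <;> rcases b with i' | j' <;> simp at h
  · exact ⟨i, j', rfl⟩
  · exact ⟨i', j, Sym2.eq_swap⟩

theorem exists_completeBipartiteGraph_iso_of_ne {α β : Type*} {i k : α} {j l : β}
    {i' k' : α} {j' l' : β} (hik : i ≠ k) (hjl : j ≠ l) (hik' : i' ≠ k') (hjl' : j' ≠ l') :
    ∃ φ : completeBipartiteGraph α β ≃g completeBipartiteGraph α β,
      φ (inl i) = inl i' ∧ φ (inr j) = inr j' ∧ φ (inl k) = inl k' ∧ φ (inr l) = inr l' := by
  obtain ⟨σ, hσi, hσk⟩ :=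
    MulAction.is_two_pretransitive_iff.mp (Equiv.Perm.isMultiplyPretransitive α 2) hik hik'
  obtain ⟨τ, hτj, hτl⟩ :=
    MulAction.is_two_pretransitive_iff.mp (Equiv.Perm.isMultiplyPretransitive β 2) hjl hjl'
  exact ⟨completeBipartiteGraphCongr σ τ, by simp_all [Equiv.Perm.smul_def]⟩

instance (k : ℕ) : DecidableRel (MobiusV k).Adj :=
  inferInstanceAs (DecidableRel (circulantGraph _).Adj)

end SimpleGraph

open SimpleGraph Sum

theorem NonadjPair.exists_inl_inr {α β : Type*} {a b c d : α ⊕ β}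
    (h : NonadjPair (completeBipartiteGraph α β) a b c d) :
    ∃ (i k : α) (j l : β), i ≠ k ∧ j ≠ l ∧
      s(a, b) = s(inl i, inr j) ∧ s(c, d) = s(inl k, inr l) := by
  obtain ⟨hab, hcd, hac, had, hbc, hbd⟩ := h
  obtain ⟨i, j, hij⟩ := completeBipartiteGraph_edge_eq hab
  obtain ⟨k, l, hkl⟩ := completeBipartiteGraph_edge_eq hcd
  refine ⟨i, k, j, l, ?_, ?_, hij, hkl⟩ <;> rintro rfl <;>
    simp only [Sym2.eq_iff] at hij hkl <;> grind

/-- The Hamiltonian cycle `x, a, inr 2, c, y, d, inl 2, b` of the bridged graph becomes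
`0, 1, …, 7`, and its three remaining edges become the rungs `i ~ i + 4`. -/
def bridgeK33Labeling : (Fin 3 ⊕ Fin 3) ⊕ Fin 2 → ZMod 8
  | inl (inl i) => ![1, 3, 6] i
  | inl (inr j) => ![7, 5, 2] j
  | inr t => ![0, 4] t

theorem bridgeK33Labeling_adj_iff : ∀ u v,
    (Bridge (completeBipartiteGraph (Fin 3) (Fin 3)) (inl 0) (inr 0) (inl 1) (inr 1)).Adj u v ↔
      (MobiusV 4).Adj (bridgeK33Labeling u) (bridgeK33Labeling v) := by
  decide

theorem nonempty_bridgeK33_iso_mobiusV :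
    Nonempty (Bridge (completeBipartiteGraph (Fin 3) (Fin 3)) (inl 0) (inr 0) (inl 1) (inr 1) ≃g
      MobiusV 4) :=
  ⟨{ toEquiv := Equiv.ofBijective bridgeK33Labeling (by decide)
     map_rel_iff' := (bridgeK33Labeling_adj_iff _ _).symm }⟩

theorem stmt9 (a b c d : Fin 3 ⊕ Fin 3)
    (hpair : NonadjPair (completeBipartiteGraph (Fin 3) (Fin 3)) a b c d) :
    Nonempty (Bridge (completeBipartiteGraph (Fin 3) (Fin 3)) a b c d ≃g MobiusV 4) := by
  obtain ⟨i, k, j, l, hik, hjl, hab, hcd⟩ := hpair.exists_inl_inr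
  obtain ⟨φ, hi, hj, hk, hl⟩ :=
    exists_completeBipartiteGraph_iso_of_ne hik hjl (zero_ne_one' (Fin 3)) (zero_ne_one' (Fin 3))
  obtain ⟨ψ⟩ := nonempty_bridgeK33_iso_mobiusV
  have e := φ.bridge (inl i) (inr j) (inl k) (inr l)
  rw [hi, hj, hk, hl] at e
  rw [bridge_congr hab hcd]
  exact ⟨e.trans ψ⟩
end

section
/- For no pair of non-adjacent edges ab and cd of Q_8 (the cube graph) is the graph obtained from Q_8 by bridging ab and cd isomorphic to the Petersen graph P_{10}. -/
open SimpleGraph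

/-!
The Petersen graph has no 4-cycle: two distinct 2-subsets of a 5-set have at most one 2-subset
disjoint from both. The cube does have 4-cycles, its six faces, and each edge lies on only two
of them, so deleting any two edges leaves a face intact. Apart from deleting `ab` and `cd`,
bridging only adds vertices and edges, so that face is still a 4-cycle of the bridged graph,
which therefore cannot be the Petersen graph.
-/

namespace SimpleGraph

variable {V : Type*} {G : SimpleGraph V}

theorem cycleGraph_isContained_iff_exists_injective {n : ℕ} :
    cycleGraph (n + 2) ⊑ G ↔
      ∃ σ : Fin (n + 2) → V, Function.Injective σ ∧ ∀ i, G.Adj (σ i) (σ (i + 1)) := by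
  constructor
  · rintro ⟨f⟩
    refine ⟨f, f.injective, fun i => f.toHom.map_adj ?_⟩
    simp [cycleGraph_adj]
  · rintro ⟨σ, hσ, hadj⟩
    refine ⟨⟨⟨σ, fun {i j} hij => ?_⟩, hσ⟩⟩
    rcases cycleGraph_adj.mp hij with h | h
    · rw [sub_eq_iff_eq_add'.mp h]
      exact (hadj j).symm
    · rw [sub_eq_iff_eq_add'.mp h]
      exact hadj i

instance boxProdDecidableRel {W : Type*} [DecidableEq V] [DecidableEq W] (H : SimpleGraph W)
    [DecidableRel G.Adj] [DecidableRel H.Adj] : DecidableRel (G □ H).Adj :=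
  fun _ _ => decidable_of_iff' _ boxProd_adj

end SimpleGraph

theorem deleteEdges_isContained_bridge {V : Type*} (H : SimpleGraph V) (a b c d : V) :
    H.deleteEdges {s(a, b), s(c, d)} ⊑ Bridge H a b c d := by
  refine ⟨⟨⟨Sum.inl, fun {u v} huv => ?_⟩, Sum.inl_injective⟩⟩
  rw [deleteEdges_adj] at huv
  rw [Bridge, fromEdgeSet_adj]
  exact ⟨Or.inl ⟨s(u, v), huv, rfl⟩, by simpa using huv.1.ne⟩

instance : DecidableRel Petersen.Adj := fun s t =>
  inferInstanceAs (Decidable (Disjoint (s : Finset (Fin 5)) (t : Finset (Fin 5))))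

theorem petersen_eq_or_eq_of_adj (p q r s : {s : Finset (Fin 5) // s.card = 2}) :
    Petersen.Adj p q → Petersen.Adj q r → Petersen.Adj p s → Petersen.Adj s r →
      p = r ∨ q = s := by
  revert p q r s
  decide

theorem cycleGraph_four_free_petersen : (cycleGraph 4).Free Petersen := by
  intro hC
  obtain ⟨σ, hσ, hadj⟩ := cycleGraph_isContained_iff_exists_injective.mp hC
  rcases petersen_eq_or_eq_of_adj (σ 0) (σ 1) (σ 2) (σ 3)
      (hadj 0) (hadj 1) (hadj 3).symm (hadj 2).symm with h | h <;>
    exact absurd (hσ h) (by decide)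

instance (k : ℕ) : DecidableRel (LadderQ k).Adj :=
  inferInstanceAs (DecidableRel (cycleGraph k □ completeGraph (Fin 2)).Adj)

def cubeFace : Fin 2 ⊕ Fin 4 → Fin 4 → Fin 4 × Fin 2
  | .inl j => fun i => (i, j)
  | .inr k => ![(k, 0), (k + 1, 0), (k + 1, 1), (k, 1)]

theorem cubeFace_injective : ∀ F, Function.Injective (cubeFace F) := by
  decide

theorem ladderQ_four_adj_cubeFace :
    ∀ F i, (LadderQ 4).Adj (cubeFace F i) (cubeFace F (i + 1)) := by
  decide

theorem exists_cubeFace_avoiding : ∀ e f : Sym2 (Fin 4 × Fin 2),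
    ∃ F, ∀ i, s(cubeFace F i, cubeFace F (i + 1)) ≠ e ∧
      s(cubeFace F i, cubeFace F (i + 1)) ≠ f := by
  decide

theorem cycleGraph_four_isContained_ladderQ_four_deleteEdges (e f : Sym2 (Fin 4 × Fin 2)) :
    cycleGraph 4 ⊑ (LadderQ 4).deleteEdges {e, f} := by
  obtain ⟨F, hF⟩ := exists_cubeFace_avoiding e f
  refine cycleGraph_isContained_iff_exists_injective.mpr
    ⟨cubeFace F, cubeFace_injective F, fun i => ?_⟩
  rw [deleteEdges_adj]
  exact ⟨ladderQ_four_adj_cubeFace F i, by simpa [not_or] using hF i⟩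

theorem stmt17_general (a b c d : Fin 4 × Fin 2) :
    ¬ Nonempty (Bridge (LadderQ 4) a b c d ≃g Petersen) := by
  rintro ⟨φ⟩
  have hC : cycleGraph 4 ⊑ Bridge (LadderQ 4) a b c d :=
    (cycleGraph_four_isContained_ladderQ_four_deleteEdges _ _).trans
      (deleteEdges_isContained_bridge _ a b c d)
  exact cycleGraph_four_free_petersen (hC.trans φ.isContained)

theorem stmt17 (a b c d : Fin 4 × Fin 2)
    (hpair : NonadjPair (LadderQ 4) a b c d) :
    ¬ Nonempty (Bridge (LadderQ 4) a b c d ≃g Petersen) :=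
  stmt17_general a b c d
end
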